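/- arXiv:1711.09557 — 6 statements merged into one kernel-verified Lean document; each statement's English description precedes it below -/
import Mathlib

section
/- Noether's theorem for regular first-order Lagrangians (exact form). Let L : ℝ × ℝ^n × ℝ^n → ℝ (arguments written (t,x,v)) be continuously differentiable with v ↦ ∂L/∂v^i differentiable, let ξ, f : ℝ × ℝ^n → ℝ and η : ℝ × ℝ^n → ℝ^n be differentiable, and suppose the Noether point-symmetry condition ξ ∂_t L + Σ_i η^i ∂_{x^i} L + Σ_i (D_t η^i − v^i D_t ξ) ∂_{v^i} L + L · D_t ξ = D_t f holds for all (t,x,v) ∈ ℝ × ℝ^n × ℝ^n. Then for every twice-differentiable curve x : J → ℝ^n on an interval J that satisfies the Euler–Lagrange equations (d/dt)(∂_{v^i} L(t, x(t), ẋ(t))) = ∂_{x^i} L(t, x(t), ẋ(t)) for all i, the function I(t) = ξ(t,x(t)) · (Σ_i ẋ^i(t) ∂_{v^i} L − L) − Σ_i ∂_{v^i} L · η^i(t,x(t)) + f(t,x(t)), where all partial derivatives of L are evaluated at (t, x(t), ẋ(t)), is constant on J. -/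
open scoped BigOperators

/-- The total-derivative operator `D_t` acting on a function `F(t,x)`,
evaluated at `(t,x,v)`: `D_t F = ∂ₜF + Σₖ vᵏ ∂_{xᵏ}F`. -/
noncomputable def totalDeriv {n : ℕ} (F : ℝ × (Fin n → ℝ) → ℝ)
    (t : ℝ) (x v : Fin n → ℝ) : ℝ :=
  fderiv ℝ F (t, x) (1, 0) + ∑ k, v k * fderiv ℝ F (t, x) (0, Pi.single k 1)

lemma sum_single_smul {n : ℕ} (v : Fin n → ℝ) :
    ∑ k, v k • (Pi.single k 1 : Fin n → ℝ) = v := by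
  ext j
  simp [Finset.sum_apply, Pi.single_apply]

lemma decomp2 {n : ℕ} (φ : (ℝ × (Fin n → ℝ)) →L[ℝ] ℝ) (a : ℝ) (v : Fin n → ℝ) :
    φ (a, v) = a * φ (1, 0) + ∑ k, v k * φ (0, Pi.single k 1) := by
  have h : (a, v) = a • ((1:ℝ), (0 : Fin n → ℝ))
      + ∑ k, v k • ((0:ℝ), (Pi.single k 1 : Fin n → ℝ)) := by
    rw [Prod.ext_iff]
    constructor
    · simp [Prod.fst_sum]
    · simp [Prod.snd_sum, sum_single_smul]
  rw [h, map_add, map_smul, map_sum]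
  rw [smul_eq_mul]
  congr 1
  refine Finset.sum_congr rfl fun k _ => ?_
  rw [map_smul, smul_eq_mul]

lemma decomp3 {n : ℕ} (φ : (ℝ × (Fin n → ℝ) × (Fin n → ℝ)) →L[ℝ] ℝ) (a : ℝ)
    (w u : Fin n → ℝ) :
    φ (a, w, u) = a * φ (1, 0, 0) + (∑ k, w k * φ (0, Pi.single k 1, 0))
      + ∑ k, u k * φ (0, 0, Pi.single k 1) := by
  have h : (a, w, u) = a • ((1:ℝ), (0 : Fin n → ℝ), (0 : Fin n → ℝ))
      + (∑ k, w k • ((0:ℝ), (Pi.single k 1 : Fin n → ℝ), (0 : Fin n → ℝ)))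
      + ∑ k, u k • ((0:ℝ), (0 : Fin n → ℝ), (Pi.single k 1 : Fin n → ℝ)) := by
    rw [Prod.ext_iff, Prod.ext_iff]
    refine ⟨by simp [Prod.fst_sum], by simp [Prod.fst_sum, Prod.snd_sum, sum_single_smul], by
      simp [Prod.fst_sum, Prod.snd_sum, sum_single_smul]⟩
  rw [h, map_add, map_add, map_smul, map_sum, map_sum, smul_eq_mul]
  congr 1
  · congr 1
    refine Finset.sum_congr rfl fun k _ => ?_
    rw [map_smul, smul_eq_mul]
  · refine Finset.sum_congr rfl fun k _ => ?_
    rw [map_smul, smul_eq_mul]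

/-- Noether's theorem for regular first-order Lagrangians (exact form):
if `(ξ, η, f)` satisfies the Noether point-symmetry condition
`ξ ∂ₜL + Σᵢ ηⁱ ∂_{xⁱ}L + Σᵢ (D_tηⁱ − vⁱ D_tξ) ∂_{vⁱ}L + L D_tξ = D_t f`
identically, then along every twice-differentiable solution of the
Euler–Lagrange equations on an interval `J`, the function
`I(t) = ξ (Σᵢ ẋⁱ ∂_{vⁱ}L − L) − Σᵢ (∂_{vⁱ}L) ηⁱ + f`
is constant on `J`. -/
theorem noether_theorem_first_order
    (n : ℕ)
    (L : ℝ × (Fin n → ℝ) × (Fin n → ℝ) → ℝ)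
    (hL : ContDiff ℝ 1 L)
    (hLv : ∀ i : Fin n, Differentiable ℝ
      (fun p : ℝ × (Fin n → ℝ) × (Fin n → ℝ) =>
        fderiv ℝ L p (0, 0, Pi.single i 1)))
    (ξ f : ℝ × (Fin n → ℝ) → ℝ) (η : ℝ × (Fin n → ℝ) → Fin n → ℝ)
    (hξ : Differentiable ℝ ξ) (hf : Differentiable ℝ f)
    (hη : ∀ i : Fin n, Differentiable ℝ (fun p => η p i))
    (hNoether : ∀ (t : ℝ) (x v : Fin n → ℝ),
      ξ (t, x) * fderiv ℝ L (t, x, v) (1, 0, 0)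
        + (∑ i, η (t, x) i * fderiv ℝ L (t, x, v) (0, Pi.single i 1, 0))
        + (∑ i, (totalDeriv (fun p => η p i) t x v - v i * totalDeriv ξ t x v)
            * fderiv ℝ L (t, x, v) (0, 0, Pi.single i 1))
        + L (t, x, v) * totalDeriv ξ t x v
      = totalDeriv f t x v)
    (J : Set ℝ) (hJ : J.OrdConnected)
    (x x' : ℝ → Fin n → ℝ)
    (hx : ∀ t ∈ J, ∀ i : Fin n, HasDerivAt (fun s => x s i) (x' t i) t)
    (hx2 : ∀ t ∈ J, ∀ i : Fin n, DifferentiableAt ℝ (fun s => x' s i) t)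
    (hEL : ∀ t ∈ J, ∀ i : Fin n,
      HasDerivAt (fun s => fderiv ℝ L (s, x s, x' s) (0, 0, Pi.single i 1))
        (fderiv ℝ L (t, x t, x' t) (0, Pi.single i 1, 0)) t) :
    ∀ s ∈ J, ∀ t ∈ J,
      (ξ (s, x s) * ((∑ i, x' s i * fderiv ℝ L (s, x s, x' s) (0, 0, Pi.single i 1))
            - L (s, x s, x' s))
        - (∑ i, fderiv ℝ L (s, x s, x' s) (0, 0, Pi.single i 1) * η (s, x s) i)
        + f (s, x s))
      = (ξ (t, x t) * ((∑ i, x' t i * fderiv ℝ L (t, x t, x' t) (0, 0, Pi.single i 1))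
            - L (t, x t, x' t))
        - (∑ i, fderiv ℝ L (t, x t, x' t) (0, 0, Pi.single i 1) * η (t, x t) i)
        + f (t, x t)) := by
  set I : ℝ → ℝ := fun s =>
    ξ (s, x s) * ((∑ i, x' s i * fderiv ℝ L (s, x s, x' s) (0, 0, Pi.single i 1))
          - L (s, x s, x' s))
      - (∑ i, fderiv ℝ L (s, x s, x' s) (0, 0, Pi.single i 1) * η (s, x s) i)
      + f (s, x s) with hIdef
  have key : ∀ t ∈ J, HasDerivAt I 0 t := by
    intro t ht
    have hxd : HasDerivAt x (x' t) t := hasDerivAt_pi.mpr (fun i => hx t ht i)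
    have hx'd : HasDerivAt x' (fun i => deriv (fun s => x' s i) t) t :=
      hasDerivAt_pi.mpr (fun i => (hx2 t ht i).hasDerivAt)
    have hc3 : HasDerivAt (fun s => (s, x s, x' s))
        ((1:ℝ), x' t, fun i => deriv (fun s => x' s i) t) t :=
      HasDerivAt.prodMk (hasDerivAt_id t) (HasDerivAt.prodMk hxd hx'd)
    have hc2 : HasDerivAt (fun s => (s, x s)) ((1:ℝ), x' t) t :=
      HasDerivAt.prodMk (hasDerivAt_id t) hxd
    have hLd : HasDerivAt (fun s => L (s, x s, x' s))
        (fderiv ℝ L (t, x t, x' t) (1, x' t, fun i => deriv (fun s => x' s i) t)) t :=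
      ((hL.differentiable one_ne_zero) (t, x t, x' t)).hasFDerivAt.comp_hasDerivAt t hc3
    have hξd : HasDerivAt (fun s => ξ (s, x s)) (fderiv ℝ ξ (t, x t) (1, x' t)) t :=
      (hξ (t, x t)).hasFDerivAt.comp_hasDerivAt t hc2
    have hfd : HasDerivAt (fun s => f (s, x s)) (fderiv ℝ f (t, x t) (1, x' t)) t :=
      (hf (t, x t)).hasFDerivAt.comp_hasDerivAt t hc2
    have hηd : ∀ i, HasDerivAt (fun s => η (s, x s) i)
        (fderiv ℝ (fun p => η p i) (t, x t) (1, x' t)) t :=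
      fun i => by
        have h := ((hη i) (t, x t)).hasFDerivAt.comp_hasDerivAt t hc2
        exact h
    have hP : ∀ i, HasDerivAt (fun s => fderiv ℝ L (s, x s, x' s) (0, 0, Pi.single i 1))
        (fderiv ℝ L (t, x t, x' t) (0, Pi.single i 1, 0)) t := fun i => hEL t ht i
    have hS : HasDerivAt
        (fun s => ∑ i, x' s i * fderiv ℝ L (s, x s, x' s) (0, 0, Pi.single i 1))
        (∑ i, (deriv (fun s => x' s i) t * fderiv ℝ L (t, x t, x' t) (0, 0, Pi.single i 1)
          + x' t i * fderiv ℝ L (t, x t, x' t) (0, Pi.single i 1, 0))) t :=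
      HasDerivAt.fun_sum fun i _ => ((hx2 t ht i).hasDerivAt.mul (hP i))
    have hS2 : HasDerivAt
        (fun s => ∑ i, fderiv ℝ L (s, x s, x' s) (0, 0, Pi.single i 1) * η (s, x s) i)
        (∑ i, (fderiv ℝ L (t, x t, x' t) (0, Pi.single i 1, 0) * η (t, x t) i
          + fderiv ℝ L (t, x t, x' t) (0, 0, Pi.single i 1)
            * fderiv ℝ (fun p => η p i) (t, x t) (1, x' t))) t :=
      HasDerivAt.fun_sum fun i _ => (hP i).mul (hηd i)
    have hI' : HasDerivAt I
        (fderiv ℝ ξ (t, x t) (1, x' t)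
            * ((∑ i, x' t i * fderiv ℝ L (t, x t, x' t) (0, 0, Pi.single i 1))
              - L (t, x t, x' t))
          + ξ (t, x t)
            * ((∑ i, (deriv (fun s => x' s i) t
                  * fderiv ℝ L (t, x t, x' t) (0, 0, Pi.single i 1)
                + x' t i * fderiv ℝ L (t, x t, x' t) (0, Pi.single i 1, 0)))
              - fderiv ℝ L (t, x t, x' t) (1, x' t, fun i => deriv (fun s => x' s i) t))
          - (∑ i, (fderiv ℝ L (t, x t, x' t) (0, Pi.single i 1, 0) * η (t, x t) i
              + fderiv ℝ L (t, x t, x' t) (0, 0, Pi.single i 1)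
                * fderiv ℝ (fun p => η p i) (t, x t) (1, x' t)))
          + fderiv ℝ f (t, x t) (1, x' t)) t :=
      ((hξd.mul (hS.sub hLd)).sub hS2).add hfd
    have hxi : fderiv ℝ ξ (t, x t) (1, x' t) = totalDeriv ξ t (x t) (x' t) := by
      rw [decomp2 (fderiv ℝ ξ (t, x t)) 1 (x' t), one_mul, totalDeriv]
    have hfi : fderiv ℝ f (t, x t) (1, x' t) = totalDeriv f t (x t) (x' t) := by
      rw [decomp2 (fderiv ℝ f (t, x t)) 1 (x' t), one_mul, totalDeriv]
    have hηi : ∀ i, fderiv ℝ (fun p => η p i) (t, x t) (1, x' t)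
        = totalDeriv (fun p => η p i) t (x t) (x' t) := by
      intro i
      rw [decomp2 (fderiv ℝ (fun p => η p i) (t, x t)) 1 (x' t), one_mul, totalDeriv]
    have hLi : fderiv ℝ L (t, x t, x' t) (1, x' t, fun i => deriv (fun s => x' s i) t)
        = fderiv ℝ L (t, x t, x' t) (1, 0, 0)
          + (∑ k, x' t k * fderiv ℝ L (t, x t, x' t) (0, Pi.single k 1, 0))
          + ∑ k, deriv (fun s => x' s k) t
              * fderiv ℝ L (t, x t, x' t) (0, 0, Pi.single k 1) := by
      rw [decomp3 (fderiv ℝ L (t, x t, x' t)) 1 (x' t)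
        (fun i => deriv (fun s => x' s i) t), one_mul]
    rw [hxi, hfi, hLi] at hI'
    simp only [hηi] at hI'
    have hN := hNoether t (x t) (x' t)
    have e1 : (∑ i, η (t, x t) i * fderiv ℝ L (t, x t, x' t) (0, Pi.single i 1, 0))
        = ∑ i, fderiv ℝ L (t, x t, x' t) (0, Pi.single i 1, 0) * η (t, x t) i :=
      Finset.sum_congr rfl fun i _ => mul_comm _ _
    have e2 : (∑ i, (totalDeriv (fun p => η p i) t (x t) (x' t)
          - x' t i * totalDeriv ξ t (x t) (x' t))
            * fderiv ℝ L (t, x t, x' t) (0, 0, Pi.single i 1))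
        = (∑ i, fderiv ℝ L (t, x t, x' t) (0, 0, Pi.single i 1)
            * totalDeriv (fun p => η p i) t (x t) (x' t))
          - totalDeriv ξ t (x t) (x' t)
            * ∑ i, x' t i * fderiv ℝ L (t, x t, x' t) (0, 0, Pi.single i 1) := by
      rw [Finset.mul_sum, ← Finset.sum_sub_distrib]
      exact Finset.sum_congr rfl fun i _ => by ring
    rw [e1, e2] at hN
    have h0 : totalDeriv ξ t (x t) (x' t)
            * ((∑ i, x' t i * fderiv ℝ L (t, x t, x' t) (0, 0, Pi.single i 1))
              - L (t, x t, x' t))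
          + ξ (t, x t)
            * ((∑ i, (deriv (fun s => x' s i) t
                  * fderiv ℝ L (t, x t, x' t) (0, 0, Pi.single i 1)
                + x' t i * fderiv ℝ L (t, x t, x' t) (0, Pi.single i 1, 0)))
              - (fderiv ℝ L (t, x t, x' t) (1, 0, 0)
                + (∑ k, x' t k * fderiv ℝ L (t, x t, x' t) (0, Pi.single k 1, 0))
                + ∑ k, deriv (fun s => x' s k) t
                    * fderiv ℝ L (t, x t, x' t) (0, 0, Pi.single k 1)))
          - (∑ i, (fderiv ℝ L (t, x t, x' t) (0, Pi.single i 1, 0) * η (t, x t) i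
              + fderiv ℝ L (t, x t, x' t) (0, 0, Pi.single i 1)
                * totalDeriv (fun p => η p i) t (x t) (x' t)))
          + totalDeriv f t (x t) (x' t) = 0 := by
      rw [Finset.sum_add_distrib, Finset.sum_add_distrib]
      linear_combination -hN
    exact h0 ▸ hI'
  have const : ∀ a ∈ J, ∀ b ∈ J, a ≤ b → I b = I a := by
    intro a ha b hb hab
    have hsub : Set.Icc a b ⊆ J := hJ.out ha hb
    have hcont : ContinuousOn I (Set.Icc a b) := fun u hu =>
      ((key u (hsub hu)).continuousAt).continuousWithinAt
    exact constant_of_has_deriv_right_zero hcont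
      (fun u hu => (key u (hsub (Set.Ico_subset_Icc_self hu))).hasDerivWithinAt)
      b (Set.right_mem_Icc.mpr hab)
  intro s hs t ht
  rcases le_total s t with h | h
  · exact (const s hs t ht h).symm
  · exact const t ht s hs h
end

section
/- Zeroth-order (ε⁰) approximate Noether determining equations: Let g : ℝ^n → Sym(n,ℝ) be a smooth field of symmetric n×n matrices with g(x) invertible for every x, let V₀, ξ₀, f₀ : ℝ × ℝ^n → ℝ and η₀ : ℝ × ℝ^n → ℝ^n be smooth, and set L₀(t,x,v) = ½ Σ_{i,j} g_{ij}(x) v^i v^j − V₀(t,x). Then the Noether condition ξ₀ ∂_t L₀ + Σ_i η₀^i ∂_{x^i} L₀ + Σ_i (D_t η₀^i − v^i D_t ξ₀) ∂_{v^i} L₀ + L₀ · D_t ξ₀ = D_t f₀ holds for all (t,x,v) ∈ ℝ × ℝ^n × ℝ^n if and only if the following four conditions hold identically: (i) ∂_{x^k} ξ₀ = 0 for all k (so ξ₀ = ξ₀(t)); (ii) Σ_k η₀^k ∂_{x^k} g_{ij} + Σ_k g_{kj} ∂_{x^i} η₀^k + Σ_k g_{ik} ∂_{x^j} η₀^k =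 (∂_t ξ₀) g_{ij} for all i,j; (iii) Σ_i g_{ij} ∂_t η₀^i = ∂_{x^j} f₀ for all j; (iv) ξ₀ ∂_t V₀ + Σ_k η₀^k ∂_{x^k} V₀ + (∂_t ξ₀) V₀ + ∂_t f₀ = 0. -/
open scoped BigOperators

/-- Partial derivative with respect to `t` of a function `F(t,x)`. -/
noncomputable def pdt {n : ℕ} (F : ℝ → (Fin n → ℝ) → ℝ) (t : ℝ) (x : Fin n → ℝ) : ℝ :=
  deriv (fun s => F s x) t

/-- Partial derivative with respect to `xᵏ` of a function `F(t,x)`. -/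
noncomputable def pdx {n : ℕ} (F : ℝ → (Fin n → ℝ) → ℝ) (k : Fin n)
    (t : ℝ) (x : Fin n → ℝ) : ℝ :=
  fderiv ℝ (F t) x (Pi.single k 1)

/-- The total-derivative operator: `D_t F = ∂ₜF + Σₖ vᵏ ∂_{xᵏ}F`. -/
noncomputable def Dtot {n : ℕ} (F : ℝ → (Fin n → ℝ) → ℝ)
    (t : ℝ) (x v : Fin n → ℝ) : ℝ :=
  pdt F t x + ∑ k, v k * pdx F k t x

/-- The regular Lagrangian `L₀(t,x,v) = ½ Σ g_{ij}(x) vⁱvʲ − V₀(t,x)`. -/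
noncomputable def lag {n : ℕ} (g : (Fin n → ℝ) → Fin n → Fin n → ℝ)
    (V : ℝ → (Fin n → ℝ) → ℝ) (t : ℝ) (x v : Fin n → ℝ) : ℝ :=
  (1/2) * (∑ i, ∑ j, g x i j * v i * v j) - V t x

namespace NoetherAux

variable {n : ℕ}

/-! ### Components of the normal form -/

noncomputable def Mmat (g : (Fin n → ℝ) → Fin n → Fin n → ℝ)
    (ξ₀ : ℝ → (Fin n → ℝ) → ℝ) (η₀ : ℝ → (Fin n → ℝ) → Fin n → ℝ)
    (t : ℝ) (x : Fin n → ℝ) (a b : Fin n) : ℝ :=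
  (1/2) * (∑ i, η₀ t x i * fderiv ℝ (fun y => g y a b) x (Pi.single i 1))
    + (∑ i, pdx (fun s y => η₀ s y i) a t x * g x i b)
    - (1/2) * pdt ξ₀ t x * g x a b

noncomputable def Pz (V₀ ξ₀ f₀ : ℝ → (Fin n → ℝ) → ℝ) (η₀ : ℝ → (Fin n → ℝ) → Fin n → ℝ)
    (t : ℝ) (x : Fin n → ℝ) : ℝ :=
  -(ξ₀ t x * pdt V₀ t x) - (∑ i, η₀ t x i * pdx V₀ i t x) - V₀ t x * pdt ξ₀ t x - pdt f₀ t x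

noncomputable def Pa (g : (Fin n → ℝ) → Fin n → Fin n → ℝ)
    (V₀ ξ₀ f₀ : ℝ → (Fin n → ℝ) → ℝ) (η₀ : ℝ → (Fin n → ℝ) → Fin n → ℝ)
    (t : ℝ) (x v : Fin n → ℝ) : ℝ :=
  ∑ j, v j * ((∑ i, g x i j * pdt (fun s y => η₀ s y i) t x)
      - V₀ t x * pdx ξ₀ j t x - pdx f₀ j t x)

noncomputable def Pb (g : (Fin n → ℝ) → Fin n → Fin n → ℝ)
    (ξ₀ : ℝ → (Fin n → ℝ) → ℝ) (η₀ : ℝ → (Fin n → ℝ) → Fin n → ℝ)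
    (t : ℝ) (x v : Fin n → ℝ) : ℝ :=
  ∑ a, ∑ b, (v a * v b) * Mmat g ξ₀ η₀ t x a b

noncomputable def Pc (g : (Fin n → ℝ) → Fin n → Fin n → ℝ)
    (ξ₀ : ℝ → (Fin n → ℝ) → ℝ) (t : ℝ) (x v : Fin n → ℝ) : ℝ :=
  (-(1/2)) * (∑ k, v k * pdx ξ₀ k t x) * (∑ a, ∑ b, g x a b * v a * v b)

noncomputable def NF (g : (Fin n → ℝ) → Fin n → Fin n → ℝ)
    (V₀ ξ₀ f₀ : ℝ → (Fin n → ℝ) → ℝ) (η₀ : ℝ → (Fin n → ℝ) → Fin n → ℝ)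
    (t : ℝ) (x v : Fin n → ℝ) : ℝ :=
  Pz V₀ ξ₀ f₀ η₀ t x + Pa g V₀ ξ₀ f₀ η₀ t x v + Pb g ξ₀ η₀ t x v + Pc g ξ₀ t x v

/-! ### Differentiability helpers and derivative computations -/

lemma diffX (F : ℝ → (Fin n → ℝ) → ℝ) (hF : ContDiff ℝ (⊤ : ℕ∞) (Function.uncurry F))
    (t : ℝ) (x : Fin n → ℝ) : DifferentiableAt ℝ (F t) x := by
  have h := (hF.differentiable (by simp)).differentiableAt (x := (t, x))
  exact h.comp x (DifferentiableAt.prodMk (differentiableAt_const t) differentiableAt_id)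

lemma lagT (g : (Fin n → ℝ) → Fin n → Fin n → ℝ) (V₀ : ℝ → (Fin n → ℝ) → ℝ)
    (t : ℝ) (x v : Fin n → ℝ) :
    deriv (fun s => lag g V₀ s x v) t = -(pdt V₀ t x) := by
  unfold lag pdt
  rw [deriv_const_sub]

lemma lagX (g : (Fin n → ℝ) → Fin n → Fin n → ℝ)
    (hg : ∀ i j : Fin n, ContDiff ℝ (⊤ : ℕ∞) (fun x => g x i j))
    (V₀ : ℝ → (Fin n → ℝ) → ℝ) (hV₀ : ContDiff ℝ (⊤ : ℕ∞) (Function.uncurry V₀))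
    (t : ℝ) (x v : Fin n → ℝ) (i : Fin n) :
    fderiv ℝ (fun y => lag g V₀ t y v) x (Pi.single i 1)
      = (1/2) * (∑ j, ∑ k, (v j * v k) * fderiv ℝ (fun y => g y j k) x (Pi.single i 1))
        - pdx V₀ i t x := by
  have hgd : ∀ j k : Fin n, DifferentiableAt ℝ (fun y => g y j k) x :=
    fun j k => ((hg j k).differentiable (by simp)).differentiableAt
  have hterm : ∀ j k : Fin n, DifferentiableAt ℝ (fun y => g y j k * v j * v k) x :=
    fun j k => ((hgd j k).mul_const (v j)).mul_const (v k)
  have hin : ∀ j : Fin n, DifferentiableAt ℝ (fun y => ∑ k, g y j k * v j * v k) x :=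
    fun j => DifferentiableAt.fun_sum (fun k _ => hterm j k)
  have hsum : DifferentiableAt ℝ (fun y => ∑ j, ∑ k, g y j k * v j * v k) x :=
    DifferentiableAt.fun_sum (fun j _ => hin j)
  have hVd := diffX V₀ hV₀ t x
  have h2 : ∀ j : Fin n, fderiv ℝ (fun y => ∑ k, g y j k * v j * v k) x
      = ∑ k, (v j * v k) • fderiv ℝ (fun y => g y j k) x := by
    intro j
    rw [fderiv_fun_sum (fun k _ => hterm j k)]
    refine Finset.sum_congr rfl fun k _ => ?_
    have e : (fun y => g y j k * v j * v k) = fun y => g y j k * (v j * v k) := by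
      funext y; ring
    rw [e, fderiv_mul_const (hgd j k)]
  unfold lag pdx
  rw [fderiv_fun_sub (hsum.const_mul _) hVd, fderiv_const_mul hsum, fderiv_fun_sum (fun j _ => hin j)]
  simp only [ContinuousLinearMap.sub_apply, ContinuousLinearMap.smul_apply,
    ContinuousLinearMap.coe_sum', Finset.sum_apply, h2, smul_eq_mul, Finset.mul_sum]

lemma lagV (g : (Fin n → ℝ) → Fin n → Fin n → ℝ)
    (hgsym : ∀ (x : Fin n → ℝ) (i j : Fin n), g x i j = g x j i)
    (V₀ : ℝ → (Fin n → ℝ) → ℝ) (t : ℝ) (x v : Fin n → ℝ) (i : Fin n) :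
    fderiv ℝ (fun w => lag g V₀ t x w) v (Pi.single i 1) = ∑ j, g x i j * v j := by
  have hproj : ∀ j : Fin n, DifferentiableAt ℝ (fun w : Fin n → ℝ => w j) v :=
    fun j => (ContinuousLinearMap.proj (R := ℝ) (φ := fun _ : Fin n => ℝ) j).differentiableAt
  have hterm : ∀ a b : Fin n, DifferentiableAt ℝ (fun w : Fin n → ℝ => g x a b * w a * w b) v :=
    fun a b => ((hproj a).const_mul _).mul (hproj b)
  have hin : ∀ a : Fin n, DifferentiableAt ℝ (fun w : Fin n → ℝ => ∑ b, g x a b * w a * w b) v :=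
    fun a => DifferentiableAt.fun_sum (fun b _ => hterm a b)
  have hsum : DifferentiableAt ℝ (fun w : Fin n → ℝ => ∑ a, ∑ b, g x a b * w a * w b) v :=
    DifferentiableAt.fun_sum (fun a _ => hin a)
  have hp : ∀ a : Fin n, fderiv ℝ (fun w : Fin n → ℝ => w a) v
      = ContinuousLinearMap.proj a :=
    fun a => (ContinuousLinearMap.proj (R := ℝ) (φ := fun _ : Fin n => ℝ) a).fderiv
  have h1 : ∀ a b : Fin n, fderiv ℝ (fun w : Fin n → ℝ => g x a b * w a * w b) v (Pi.single i 1)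
      = g x a b * ((if a = i then (1:ℝ) else 0) * v b + v a * (if b = i then (1:ℝ) else 0)) := by
    intro a b
    have e : (fun w : Fin n → ℝ => g x a b * w a * w b)
        = fun w => g x a b * (w a * w b) := by funext w; ring
    rw [e, fderiv_const_mul ((hproj a).fun_mul (hproj b)), fderiv_fun_mul (hproj a) (hproj b), hp, hp]
    simp only [ContinuousLinearMap.smul_apply, ContinuousLinearMap.add_apply,
      ContinuousLinearMap.proj_apply, Pi.single_apply, smul_eq_mul]
    split_ifs <;> ring
  unfold lag
  rw [fderiv_sub_const, fderiv_const_mul hsum, fderiv_fun_sum (fun a _ => hin a)]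
  have hinner : ∀ a : Fin n, fderiv ℝ (fun w : Fin n → ℝ => ∑ b, g x a b * w a * w b) v
      = ∑ b, fderiv ℝ (fun w : Fin n → ℝ => g x a b * w a * w b) v :=
    fun a => fderiv_fun_sum (fun b _ => hterm a b)
  simp only [hinner, ContinuousLinearMap.smul_apply, ContinuousLinearMap.coe_sum',
    Finset.sum_apply, h1, smul_eq_mul]
  have e2 : ∀ a : Fin n, ∑ b, g x a b * ((if a = i then (1:ℝ) else 0) * v b + v a * (if b = i then (1:ℝ) else 0))
      = (if a = i then (∑ b, g x a b * v b) else 0) + g x a i * v a := by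
    intro a
    have hterm2 : ∀ b : Fin n, g x a b * ((if a = i then (1:ℝ) else 0) * v b + v a * (if b = i then (1:ℝ) else 0))
        = (if a = i then g x a b * v b else 0) + (if b = i then g x a b * v a else 0) := by
      intro b; split_ifs <;> ring
    rw [Finset.sum_congr rfl fun b _ => hterm2 b, Finset.sum_add_distrib]
    congr 1
    · by_cases h : a = i <;> simp [h]
    · rw [Finset.sum_ite_eq' Finset.univ i (fun b => g x a b * v a)]; simp
  simp only [e2]
  rw [Finset.sum_add_distrib]
  have e4 : ∑ a, (if a = i then (∑ b, g x a b * v b) else 0) = ∑ b, g x i b * v b := by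
    rw [Finset.sum_ite_eq' Finset.univ i (fun a => ∑ b, g x a b * v b)]; simp
  have e3 : ∑ a, g x a i * v a = ∑ a, g x i a * v a :=
    Finset.sum_congr rfl fun a _ => by rw [hgsym x a i]
  rw [e4, e3]
  ring

/-! ### Finset sum manipulation -/

lemma sum3_comm (f : Fin n → Fin n → Fin n → ℝ) :
    ∑ i, ∑ a, ∑ b, f i a b = ∑ a, ∑ b, ∑ i, f i a b := by
  rw [Finset.sum_comm]
  exact Finset.sum_congr rfl fun a _ => Finset.sum_comm

lemma E2gen (η Vx : Fin n → ℝ) (Dg : Fin n → Fin n → Fin n → ℝ) (v : Fin n → ℝ) :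
    ∑ i, η i * ((1/2) * (∑ a, ∑ b, (v a * v b) * Dg i a b) - Vx i)
    = (1/2) * (∑ a, ∑ b, (v a * v b) * (∑ i, η i * Dg i a b)) - ∑ i, η i * Vx i := by
  calc ∑ i, η i * ((1/2) * (∑ a, ∑ b, (v a * v b) * Dg i a b) - Vx i)
      = ∑ i, ((1/2) * (∑ a, ∑ b, η i * ((v a * v b) * Dg i a b)) - η i * Vx i) := by
        refine Finset.sum_congr rfl fun i _ => ?_
        have h : ∑ a, ∑ b, η i * ((v a * v b) * Dg i a b)
            = η i * ∑ a, ∑ b, (v a * v b) * Dg i a b := by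
          rw [Finset.mul_sum]
          exact Finset.sum_congr rfl fun a _ => by rw [Finset.mul_sum]
        rw [h]; ring
    _ = (1/2) * (∑ i, ∑ a, ∑ b, η i * ((v a * v b) * Dg i a b)) - ∑ i, η i * Vx i := by
        rw [Finset.sum_sub_distrib, Finset.mul_sum]
    _ = (1/2) * (∑ a, ∑ b, (v a * v b) * (∑ i, η i * Dg i a b)) - ∑ i, η i * Vx i := by
        rw [sum3_comm]
        congr 1
        congr 1
        refine Finset.sum_congr rfl fun a _ => Finset.sum_congr rfl fun b _ => ?_
        rw [Finset.mul_sum]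
        exact Finset.sum_congr rfl fun i _ => by ring

lemma E3gen (ηt : Fin n → ℝ) (ηx G : Fin n → Fin n → ℝ) (c : ℝ) (v : Fin n → ℝ) :
    ∑ i, (ηt i + ∑ k, v k * ηx k i - v i * c) * (∑ j, G i j * v j)
    = (∑ j, v j * (∑ i, G i j * ηt i))
      + (∑ a, ∑ b, (v a * v b) * (∑ i, ηx a i * G i b))
      - c * (∑ a, ∑ b, G a b * v a * v b) := by
  have expand : ∀ i, (ηt i + ∑ k, v k * ηx k i - v i * c) * (∑ j, G i j * v j)
      = (∑ j, ηt i * (G i j * v j)) + (∑ k, ∑ j, (v k * ηx k i) * (G i j * v j))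
        - (∑ j, (v i * c) * (G i j * v j)) := by
    intro i
    have h1 : ∑ j, ηt i * (G i j * v j) = ηt i * ∑ j, G i j * v j := (Finset.mul_sum _ _ _).symm
    have h2 : ∑ k, ∑ j, (v k * ηx k i) * (G i j * v j)
        = (∑ k, v k * ηx k i) * ∑ j, G i j * v j := by
      rw [Finset.sum_mul]
      exact Finset.sum_congr rfl fun k _ => (Finset.mul_sum _ _ _).symm
    have h3 : ∑ j, (v i * c) * (G i j * v j) = (v i * c) * ∑ j, G i j * v j :=
      (Finset.mul_sum _ _ _).symm
    rw [h1, h2, h3]; ring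
  rw [Finset.sum_congr rfl fun i _ => expand i]
  rw [Finset.sum_sub_distrib, Finset.sum_add_distrib]
  congr 1
  congr 1
  · rw [Finset.sum_comm]
    refine Finset.sum_congr rfl fun j _ => ?_
    rw [Finset.mul_sum]
    exact Finset.sum_congr rfl fun i _ => by ring
  · rw [sum3_comm]
    refine Finset.sum_congr rfl fun a _ => Finset.sum_congr rfl fun b _ => ?_
    rw [Finset.mul_sum]
    exact Finset.sum_congr rfl fun i _ => by ring
  · rw [Finset.mul_sum]
    refine Finset.sum_congr rfl fun a _ => ?_
    rw [Finset.mul_sum]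
    exact Finset.sum_congr rfl fun b _ => by ring

lemma F1gen (vv A ξx fx : Fin n → ℝ) (V : ℝ) :
    ∑ j, vv j * (A j - V * ξx j - fx j)
    = ∑ j, vv j * A j - V * (∑ j, vv j * ξx j) - ∑ j, vv j * fx j := by
  rw [Finset.mul_sum, ← Finset.sum_sub_distrib, ← Finset.sum_sub_distrib]
  exact Finset.sum_congr rfl fun j _ => by ring

lemma F2gen (vv : Fin n → ℝ) (D E G : Fin n → Fin n → ℝ) (ξt : ℝ) :
    ∑ a, ∑ b, (vv a * vv b) * ((1/2) * D a b + E a b - (1/2) * ξt * G a b)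
    = (1/2) * (∑ a, ∑ b, (vv a * vv b) * D a b) + (∑ a, ∑ b, (vv a * vv b) * E a b)
      - (1/2) * ξt * (∑ a, ∑ b, G a b * vv a * vv b) := by
  have inner : ∀ a : Fin n, ∑ b, (vv a * vv b) * ((1/2) * D a b + E a b - (1/2) * ξt * G a b)
      = (1/2) * (∑ b, (vv a * vv b) * D a b) + (∑ b, (vv a * vv b) * E a b)
        - (1/2) * ξt * (∑ b, G a b * vv a * vv b) := by
    intro a
    rw [Finset.mul_sum, Finset.mul_sum, ← Finset.sum_add_distrib, ← Finset.sum_sub_distrib]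
    exact Finset.sum_congr rfl fun b _ => by ring
  rw [Finset.sum_congr rfl fun a _ => inner a, Finset.sum_sub_distrib, Finset.sum_add_distrib,
    ← Finset.mul_sum, ← Finset.mul_sum]


lemma key (g : (Fin n → ℝ) → Fin n → Fin n → ℝ)
    (hg : ∀ i j : Fin n, ContDiff ℝ (⊤ : ℕ∞) (fun x => g x i j))
    (hgsym : ∀ (x : Fin n → ℝ) (i j : Fin n), g x i j = g x j i)
    (V₀ ξ₀ f₀ : ℝ → (Fin n → ℝ) → ℝ) (η₀ : ℝ → (Fin n → ℝ) → Fin n → ℝ)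
    (hV₀ : ContDiff ℝ (⊤ : ℕ∞) (Function.uncurry V₀))
    (t : ℝ) (x v : Fin n → ℝ) :
    ξ₀ t x * deriv (fun s => lag g V₀ s x v) t
      + (∑ i, η₀ t x i * fderiv ℝ (fun y => lag g V₀ t y v) x (Pi.single i 1))
      + (∑ i, (Dtot (fun s y => η₀ s y i) t x v - v i * Dtot ξ₀ t x v)
          * fderiv ℝ (fun w => lag g V₀ t x w) v (Pi.single i 1))
      + lag g V₀ t x v * Dtot ξ₀ t x v
    = Dtot f₀ t x v + NF g V₀ ξ₀ f₀ η₀ t x v := by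
  rw [lagT g V₀ t x v]
  simp only [lagX g hg V₀ hV₀ t x v, lagV g hgsym V₀ t x v]
  unfold NF Pz Pa Pb Pc Mmat Dtot lag
  have E2 : ∑ i, η₀ t x i * ((1/2) * (∑ a, ∑ b, (v a * v b) * fderiv ℝ (fun y => g y a b) x (Pi.single i 1))
        - pdx V₀ i t x)
      = (1/2) * (∑ a, ∑ b, (v a * v b) * (∑ i, η₀ t x i * fderiv ℝ (fun y => g y a b) x (Pi.single i 1)))
        - ∑ i, η₀ t x i * pdx V₀ i t x :=
    E2gen (fun i => η₀ t x i) (fun i => pdx V₀ i t x)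
      (fun i a b => fderiv ℝ (fun y => g y a b) x (Pi.single i 1)) v
  have E3 : ∑ i, (pdt (fun s y => η₀ s y i) t x + (∑ k, v k * pdx (fun s y => η₀ s y i) k t x)
          - v i * (pdt ξ₀ t x + ∑ k, v k * pdx ξ₀ k t x)) * (∑ j, g x i j * v j)
      = (∑ j, v j * (∑ i, g x i j * pdt (fun s y => η₀ s y i) t x))
        + (∑ a, ∑ b, (v a * v b) * (∑ i, pdx (fun s y => η₀ s y i) a t x * g x i b))
        - (pdt ξ₀ t x + ∑ k, v k * pdx ξ₀ k t x) * (∑ a, ∑ b, g x a b * v a * v b) :=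
    E3gen (fun i => pdt (fun s y => η₀ s y i) t x)
      (fun k i => pdx (fun s y => η₀ s y i) k t x) (fun i j => g x i j)
      (pdt ξ₀ t x + ∑ k, v k * pdx ξ₀ k t x) v
  have F1 : ∑ j, v j * ((∑ i, g x i j * pdt (fun s y => η₀ s y i) t x)
        - V₀ t x * pdx ξ₀ j t x - pdx f₀ j t x)
      = ∑ j, v j * (∑ i, g x i j * pdt (fun s y => η₀ s y i) t x)
        - V₀ t x * (∑ j, v j * pdx ξ₀ j t x) - ∑ j, v j * pdx f₀ j t x :=
    F1gen v (fun j => ∑ i, g x i j * pdt (fun s y => η₀ s y i) t x)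
      (fun j => pdx ξ₀ j t x) (fun j => pdx f₀ j t x) (V₀ t x)
  have F2 : ∑ a, ∑ b, (v a * v b) * ((1/2) * (∑ i, η₀ t x i * fderiv ℝ (fun y => g y a b) x (Pi.single i 1))
        + (∑ i, pdx (fun s y => η₀ s y i) a t x * g x i b)
        - (1/2) * pdt ξ₀ t x * g x a b)
      = (1/2) * (∑ a, ∑ b, (v a * v b) * (∑ i, η₀ t x i * fderiv ℝ (fun y => g y a b) x (Pi.single i 1)))
        + (∑ a, ∑ b, (v a * v b) * (∑ i, pdx (fun s y => η₀ s y i) a t x * g x i b))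
        - (1/2) * pdt ξ₀ t x * (∑ a, ∑ b, g x a b * v a * v b) :=
    F2gen v (fun a b => ∑ i, η₀ t x i * fderiv ℝ (fun y => g y a b) x (Pi.single i 1))
      (fun a b => ∑ i, pdx (fun s y => η₀ s y i) a t x * g x i b)
      (fun a b => g x a b) (pdt ξ₀ t x)
  rw [E2, E3, F1, F2]
  ring

/-! ### Polynomial coefficient extraction -/

lemma cubic_coeffs (a b c d : ℝ) (h : ∀ s : ℝ, a + s * b + s^2 * c + s^3 * d = 0) :
    a = 0 ∧ b = 0 ∧ c = 0 ∧ d = 0 := by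
  have h0 := h 0
  have h1 := h 1
  have h2 := h (-1)
  have h3 := h 2
  norm_num at h0 h1 h2 h3
  refine ⟨h0, by linarith, by linarith, by linarith⟩

lemma hom1 (s : ℝ) (v C : Fin n → ℝ) :
    ∑ j, (s * v j) * C j = s * ∑ j, v j * C j := by
  rw [Finset.mul_sum]
  exact Finset.sum_congr rfl fun j _ => by ring

lemma hom2 (s : ℝ) (v : Fin n → ℝ) (M : Fin n → Fin n → ℝ) :
    ∑ a, ∑ b, ((s * v a) * (s * v b)) * M a b = s^2 * ∑ a, ∑ b, (v a * v b) * M a b := by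
  rw [Finset.mul_sum]
  refine Finset.sum_congr rfl fun a _ => ?_
  rw [Finset.mul_sum]
  exact Finset.sum_congr rfl fun b _ => by ring

lemma homQ (s : ℝ) (v : Fin n → ℝ) (G : Fin n → Fin n → ℝ) :
    ∑ a, ∑ b, G a b * (s * v a) * (s * v b) = s^2 * ∑ a, ∑ b, G a b * v a * v b := by
  rw [Finset.mul_sum]
  refine Finset.sum_congr rfl fun a _ => ?_
  rw [Finset.mul_sum]
  exact Finset.sum_congr rfl fun b _ => by ring

lemma hscale (g : (Fin n → ℝ) → Fin n → Fin n → ℝ)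
    (V₀ ξ₀ f₀ : ℝ → (Fin n → ℝ) → ℝ) (η₀ : ℝ → (Fin n → ℝ) → Fin n → ℝ)
    (t : ℝ) (x v : Fin n → ℝ) (s : ℝ) :
    NF g V₀ ξ₀ f₀ η₀ t x (s • v)
      = Pz V₀ ξ₀ f₀ η₀ t x + s * Pa g V₀ ξ₀ f₀ η₀ t x v
        + s^2 * Pb g ξ₀ η₀ t x v + s^3 * Pc g ξ₀ t x v := by
  unfold NF Pz Pa Pb Pc
  simp only [Pi.smul_apply, smul_eq_mul]
  rw [hom1 s v, hom2 s v, homQ s v, hom1 s v]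
  ring

lemma eval_single (C : Fin n → ℝ) (j : Fin n) :
    ∑ j', (Pi.single j 1 : Fin n → ℝ) j' * C j' = C j := by
  have h : ∀ j' : Fin n, (Pi.single j 1 : Fin n → ℝ) j' * C j' = if j' = j then C j' else 0 := by
    intro j'; rw [Pi.single_apply]; split_ifs <;> ring
  rw [Finset.sum_congr rfl fun j' _ => h j', Finset.sum_ite_eq' Finset.univ j C]
  simp

lemma eval2_single (M : Fin n → Fin n → ℝ) (a : Fin n) :
    ∑ i, ∑ j, ((Pi.single a 1 : Fin n → ℝ) i * (Pi.single a 1 : Fin n → ℝ) j) * M i j = M a a := by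
  have h : ∀ i : Fin n, ∑ j, ((Pi.single a 1 : Fin n → ℝ) i * (Pi.single a 1 : Fin n → ℝ) j) * M i j
      = (Pi.single a 1 : Fin n → ℝ) i * M i a := by
    intro i
    have h2 : ∀ j : Fin n, ((Pi.single a 1 : Fin n → ℝ) i * (Pi.single a 1 : Fin n → ℝ) j) * M i j
        = if j = a then (Pi.single a 1 : Fin n → ℝ) i * M i j else 0 := by
      intro j; rw [Pi.single_apply a (1:ℝ) j]; split_ifs <;> ring
    rw [Finset.sum_congr rfl fun j _ => h2 j,
      Finset.sum_ite_eq' Finset.univ a (fun j => (Pi.single a 1 : Fin n → ℝ) i * M i j)]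
    simp
  rw [Finset.sum_congr rfl fun i _ => h i, eval_single (fun i => M i a) a]

lemma eval2_pair (M : Fin n → Fin n → ℝ) (a b : Fin n) :
    ∑ i, ∑ j, (((Pi.single a 1 : Fin n → ℝ) + (Pi.single b 1 : Fin n → ℝ)) i
        * ((Pi.single a 1 : Fin n → ℝ) + (Pi.single b 1 : Fin n → ℝ)) j) * M i j
      = M a a + M a b + M b a + M b b := by
  have expand : ∀ i j : Fin n, (((Pi.single a 1 : Fin n → ℝ) + (Pi.single b 1 : Fin n → ℝ)) i
        * ((Pi.single a 1 : Fin n → ℝ) + (Pi.single b 1 : Fin n → ℝ)) j) * M i j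
      = ((Pi.single a 1 : Fin n → ℝ) i * (Pi.single a 1 : Fin n → ℝ) j) * M i j
        + ((Pi.single a 1 : Fin n → ℝ) i * (Pi.single b 1 : Fin n → ℝ) j) * M i j
        + ((Pi.single b 1 : Fin n → ℝ) i * (Pi.single a 1 : Fin n → ℝ) j) * M i j
        + ((Pi.single b 1 : Fin n → ℝ) i * (Pi.single b 1 : Fin n → ℝ) j) * M i j := by
    intro i j; simp only [Pi.add_apply]; ring
  have cross : ∀ (c d : Fin n), ∑ i, ∑ j, ((Pi.single c 1 : Fin n → ℝ) i * (Pi.single d 1 : Fin n → ℝ) j) * M i j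
      = M c d := by
    intro c d
    have h : ∀ i : Fin n, ∑ j, ((Pi.single c 1 : Fin n → ℝ) i * (Pi.single d 1 : Fin n → ℝ) j) * M i j
        = (Pi.single c 1 : Fin n → ℝ) i * M i d := by
      intro i
      have h2 : ∀ j : Fin n, ((Pi.single c 1 : Fin n → ℝ) i * (Pi.single d 1 : Fin n → ℝ) j) * M i j
          = if j = d then (Pi.single c 1 : Fin n → ℝ) i * M i j else 0 := by
        intro j; rw [Pi.single_apply d (1:ℝ) j]; split_ifs <;> ring
      rw [Finset.sum_congr rfl fun j _ => h2 j,
        Finset.sum_ite_eq' Finset.univ d (fun j => (Pi.single c 1 : Fin n → ℝ) i * M i j)]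
      simp
    rw [Finset.sum_congr rfl fun i _ => h i, eval_single (fun i => M i d) c]
  calc ∑ i, ∑ j, (((Pi.single a 1 : Fin n → ℝ) + (Pi.single b 1 : Fin n → ℝ)) i
        * ((Pi.single a 1 : Fin n → ℝ) + (Pi.single b 1 : Fin n → ℝ)) j) * M i j
      = ∑ i, ∑ j, (((Pi.single a 1 : Fin n → ℝ) i * (Pi.single a 1 : Fin n → ℝ) j) * M i j
        + ((Pi.single a 1 : Fin n → ℝ) i * (Pi.single b 1 : Fin n → ℝ) j) * M i j
        + ((Pi.single b 1 : Fin n → ℝ) i * (Pi.single a 1 : Fin n → ℝ) j) * M i j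
        + ((Pi.single b 1 : Fin n → ℝ) i * (Pi.single b 1 : Fin n → ℝ) j) * M i j) := by
        exact Finset.sum_congr rfl fun i _ => Finset.sum_congr rfl fun j _ => expand i j
    _ = M a a + M a b + M b a + M b b := by
        simp only [Finset.sum_add_distrib]
        rw [cross a a, cross a b, cross b a, cross b b]

lemma Qswap (G : Fin n → Fin n → ℝ) (v : Fin n → ℝ) :
    ∑ a, ∑ b, G a b * v a * v b = ∑ a, ∑ b, (v a * v b) * G a b :=
  Finset.sum_congr rfl fun a _ => Finset.sum_congr rfl fun b _ => by ring

lemma Madd (g : (Fin n → ℝ) → Fin n → Fin n → ℝ)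
    (hgsym : ∀ (x : Fin n → ℝ) (i j : Fin n), g x i j = g x j i)
    (ξ₀ : ℝ → (Fin n → ℝ) → ℝ) (η₀ : ℝ → (Fin n → ℝ) → Fin n → ℝ)
    (t : ℝ) (x : Fin n → ℝ) (i j : Fin n) :
    Mmat g ξ₀ η₀ t x i j + Mmat g ξ₀ η₀ t x j i
      = (∑ k, η₀ t x k * fderiv ℝ (fun y => g y i j) x (Pi.single k 1))
        + (∑ k, g x k j * pdx (fun s y => η₀ s y k) i t x)
        + (∑ k, g x i k * pdx (fun s y => η₀ s y k) j t x)
        - pdt ξ₀ t x * g x i j := by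
  unfold Mmat
  have hD : (fun y => g y j i) = (fun y => g y i j) := funext fun y => hgsym y j i
  rw [hD]
  have e1 : ∑ k, pdx (fun s y => η₀ s y k) i t x * g x k j
      = ∑ k, g x k j * pdx (fun s y => η₀ s y k) i t x :=
    Finset.sum_congr rfl fun k _ => by ring
  have e2 : ∑ k, pdx (fun s y => η₀ s y k) j t x * g x k i
      = ∑ k, g x i k * pdx (fun s y => η₀ s y k) j t x :=
    Finset.sum_congr rfl fun k _ => by rw [hgsym x k i]; ring
  rw [e1, e2, hgsym x j i]
  ring

lemma linQ_zero (g : (Fin n → ℝ) → Fin n → Fin n → ℝ)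
    (hgsym : ∀ (x : Fin n → ℝ) (i j : Fin n), g x i j = g x j i)
    (x : Fin n → ℝ) (hdet : (Matrix.of (g x)).det ≠ 0) (ξx : Fin n → ℝ)
    (h : ∀ v : Fin n → ℝ, (∑ k, v k * ξx k) * (∑ a, ∑ b, g x a b * v a * v b) = 0) :
    ∀ k, ξx k = 0 := by
  by_contra hk
  push_neg at hk
  obtain ⟨k, hk⟩ := hk
  have hQ0 : ∀ v : Fin n → ℝ, ∑ a, ∑ b, g x a b * v a * v b = 0 := by
    intro v
    set w : Fin n → ℝ := Pi.single k 1 with hw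
    have hlv : ∀ s : ℝ, ∑ j, (v + s • w) j * ξx j = (∑ j, v j * ξx j) + s * ξx k := by
      intro s
      have hterm : ∀ j, (v + s • w) j * ξx j = v j * ξx j + s * (w j * ξx j) := by
        intro j; simp only [Pi.add_apply, Pi.smul_apply, smul_eq_mul]; ring
      rw [Finset.sum_congr rfl fun j _ => hterm j, Finset.sum_add_distrib, ← Finset.mul_sum, hw,
        eval_single ξx k]
    have hcont : Continuous fun s : ℝ => ∑ a, ∑ b, g x a b * (v + s • w) a * (v + s • w) b := by
      apply continuous_finset_sum
      intro a _
      apply continuous_finset_sum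
      intro b _
      simp only [Pi.add_apply, Pi.smul_apply, smul_eq_mul]
      fun_prop
    set s₀ : ℝ := -(∑ j, v j * ξx j) / ξx k with hs₀
    have hzero : Set.EqOn (fun s : ℝ => ∑ a, ∑ b, g x a b * (v + s • w) a * (v + s • w) b)
        (fun _ => (0:ℝ)) ({s₀}ᶜ : Set ℝ) := by
      intro s hs
      have hlne : (∑ j, (v + s • w) j * ξx j) ≠ 0 := by
        rw [hlv s]
        intro hc
        apply hs
        simp only [Set.mem_singleton_iff, hs₀]
        rw [eq_div_iff hk]
        linarith
      have hp := h (v + s • w)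
      exact (mul_eq_zero.mp hp).resolve_left hlne
    have heq := Continuous.ext_on (dense_compl_singleton s₀) hcont continuous_const hzero
    have h0 := congrFun heq 0
    simpa using h0
  have hd : ∀ a, g x a a = 0 := by
    intro a
    have hq := hQ0 (Pi.single a 1)
    rw [Qswap (fun a b => g x a b) (Pi.single a 1)] at hq
    rw [eval2_single (fun i j => g x i j) a] at hq
    exact hq
  have hgz : ∀ a b, g x a b = 0 := by
    intro a b
    have hq := hQ0 (Pi.single a 1 + Pi.single b 1)
    rw [Qswap (fun a b => g x a b) (Pi.single a 1 + Pi.single b 1)] at hq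
    rw [eval2_pair (fun i j => g x i j) a b] at hq
    have := hd a
    have := hd b
    have hsym := hgsym x a b
    by_cases hab : a = b
    · subst hab; exact hd a
    · linarith [hgsym x b a]
  apply hdet
  have hzM : Matrix.of (g x) = 0 := by
    ext a b
    exact hgz a b
  rw [hzM]
  exact (have : Nonempty (Fin n) := ⟨k⟩; Matrix.det_zero)
end NoetherAux

open NoetherAux

/-- Zeroth-order (ε⁰) approximate Noether determining equations: for the
regular Lagrangian `L₀ = ½ Σ g_{ij}(x) vⁱvʲ − V₀(t,x)` with `g` smooth,
symmetric and everywhere invertible, the Noether condition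
`ξ₀ ∂ₜL₀ + Σᵢ η₀ⁱ ∂_{xⁱ}L₀ + Σᵢ (D_tη₀ⁱ − vⁱ D_tξ₀) ∂_{vⁱ}L₀ + L₀ D_tξ₀ = D_t f₀`
holds for all `(t,x,v)` if and only if
(i) `∂_{xᵏ}ξ₀ = 0`; (ii) `(L_{η₀}g)_{ij} = (∂ₜξ₀) g_{ij}`;
(iii) `Σᵢ g_{ij} ∂ₜη₀ⁱ = ∂_{xʲ}f₀`; and
(iv) `ξ₀ ∂ₜV₀ + Σₖ η₀ᵏ ∂_{xᵏ}V₀ + (∂ₜξ₀) V₀ + ∂ₜf₀ = 0` identically. -/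
theorem zeroth_order_noether_determining_equations
    (n : ℕ)
    (g : (Fin n → ℝ) → Fin n → Fin n → ℝ)
    (hg : ∀ i j : Fin n, ContDiff ℝ (⊤ : ℕ∞) (fun x => g x i j))
    (hgsym : ∀ (x : Fin n → ℝ) (i j : Fin n), g x i j = g x j i)
    (hginv : ∀ x : Fin n → ℝ, (Matrix.of (g x)).det ≠ 0)
    (V₀ ξ₀ f₀ : ℝ → (Fin n → ℝ) → ℝ)
    (η₀ : ℝ → (Fin n → ℝ) → Fin n → ℝ)
    (hV₀ : ContDiff ℝ (⊤ : ℕ∞) (Function.uncurry V₀))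
    (hξ₀ : ContDiff ℝ (⊤ : ℕ∞) (Function.uncurry ξ₀))
    (hf₀ : ContDiff ℝ (⊤ : ℕ∞) (Function.uncurry f₀))
    (hη₀ : ∀ i : Fin n, ContDiff ℝ (⊤ : ℕ∞) (fun p : ℝ × (Fin n → ℝ) => η₀ p.1 p.2 i)) :
    (∀ (t : ℝ) (x v : Fin n → ℝ),
      ξ₀ t x * deriv (fun s => lag g V₀ s x v) t
        + (∑ i, η₀ t x i * fderiv ℝ (fun y => lag g V₀ t y v) x (Pi.single i 1))
        + (∑ i, (Dtot (fun s y => η₀ s y i) t x v - v i * Dtot ξ₀ t x v)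
            * fderiv ℝ (fun w => lag g V₀ t x w) v (Pi.single i 1))
        + lag g V₀ t x v * Dtot ξ₀ t x v
      = Dtot f₀ t x v)
    ↔
    ((∀ (t : ℝ) (x : Fin n → ℝ) (k : Fin n), pdx ξ₀ k t x = 0)
      ∧ (∀ (t : ℝ) (x : Fin n → ℝ) (i j : Fin n),
          (∑ k, η₀ t x k * fderiv ℝ (fun y => g y i j) x (Pi.single k 1))
            + (∑ k, g x k j * pdx (fun s y => η₀ s y k) i t x)
            + (∑ k, g x i k * pdx (fun s y => η₀ s y k) j t x)
          = pdt ξ₀ t x * g x i j)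
      ∧ (∀ (t : ℝ) (x : Fin n → ℝ) (j : Fin n),
          (∑ i, g x i j * pdt (fun s y => η₀ s y i) t x) = pdx f₀ j t x)
      ∧ (∀ (t : ℝ) (x : Fin n → ℝ),
          ξ₀ t x * pdt V₀ t x + (∑ k, η₀ t x k * pdx V₀ k t x)
            + pdt ξ₀ t x * V₀ t x + pdt f₀ t x = 0)) := by
  have hkey := key g hg hgsym V₀ ξ₀ f₀ η₀ hV₀
  constructor
  · intro H
    have hNF : ∀ (t : ℝ) (x v : Fin n → ℝ), NF g V₀ ξ₀ f₀ η₀ t x v = 0 := by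
      intro t x v
      have h1 := H t x v
      have h2 := hkey t x v
      linarith
    have hco : ∀ (t : ℝ) (x v : Fin n → ℝ),
        Pz V₀ ξ₀ f₀ η₀ t x = 0 ∧ Pa g V₀ ξ₀ f₀ η₀ t x v = 0
          ∧ Pb g ξ₀ η₀ t x v = 0 ∧ Pc g ξ₀ t x v = 0 := by
      intro t x v
      refine cubic_coeffs _ _ _ _ fun s => ?_
      rw [← hscale g V₀ ξ₀ f₀ η₀ t x v s]
      exact hNF t x (s • v)
    have hi : ∀ (t : ℝ) (x : Fin n → ℝ) (k : Fin n), pdx ξ₀ k t x = 0 := by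
      intro t x k
      refine linQ_zero g hgsym x (hginv x) (fun j => pdx ξ₀ j t x) (fun v => ?_) k
      have h := (hco t x v).2.2.2
      unfold Pc at h
      linear_combination (-2 : ℝ) * h
    have hiii : ∀ (t : ℝ) (x : Fin n → ℝ) (j : Fin n),
        (∑ i, g x i j * pdt (fun s y => η₀ s y i) t x) = pdx f₀ j t x := by
      intro t x j
      have h := (hco t x (Pi.single j 1)).2.1
      unfold Pa at h
      have hev : ∑ j', (Pi.single j 1 : Fin n → ℝ) j'
            * ((∑ i, g x i j' * pdt (fun s y => η₀ s y i) t x)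
              - V₀ t x * pdx ξ₀ j' t x - pdx f₀ j' t x)
          = (∑ i, g x i j * pdt (fun s y => η₀ s y i) t x)
              - V₀ t x * pdx ξ₀ j t x - pdx f₀ j t x := eval_single _ j
      rw [hev] at h
      rw [hi t x j] at h
      linarith
    have hii : ∀ (t : ℝ) (x : Fin n → ℝ) (i j : Fin n),
        (∑ k, η₀ t x k * fderiv ℝ (fun y => g y i j) x (Pi.single k 1))
          + (∑ k, g x k j * pdx (fun s y => η₀ s y k) i t x)
          + (∑ k, g x i k * pdx (fun s y => η₀ s y k) j t x)
        = pdt ξ₀ t x * g x i j := by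
      intro t x i j
      have hMsum : ∀ v : Fin n → ℝ, ∑ a, ∑ b, (v a * v b) * Mmat g ξ₀ η₀ t x a b = 0 :=
        fun v => (hco t x v).2.2.1
      have h1 := hMsum (Pi.single i 1)
      have h2 := hMsum (Pi.single j 1)
      have h3 := hMsum (Pi.single i 1 + Pi.single j 1)
      rw [eval2_single (Mmat g ξ₀ η₀ t x) i] at h1
      rw [eval2_single (Mmat g ξ₀ η₀ t x) j] at h2
      rw [eval2_pair (Mmat g ξ₀ η₀ t x) i j] at h3
      have hM := Madd g hgsym ξ₀ η₀ t x i j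
      linarith
    have hiv : ∀ (t : ℝ) (x : Fin n → ℝ),
        ξ₀ t x * pdt V₀ t x + (∑ k, η₀ t x k * pdx V₀ k t x)
          + pdt ξ₀ t x * V₀ t x + pdt f₀ t x = 0 := by
      intro t x
      have h := (hco t x 0).1
      unfold Pz at h
      linear_combination -h
    exact ⟨hi, hii, hiii, hiv⟩
  · rintro ⟨h1, h2, h3, h4⟩ t x v
    rw [hkey t x v]
    have hPz : Pz V₀ ξ₀ f₀ η₀ t x = 0 := by
      unfold Pz
      linear_combination -(h4 t x)
    have hPa : Pa g V₀ ξ₀ f₀ η₀ t x v = 0 := by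
      unfold Pa
      refine Finset.sum_eq_zero fun j _ => ?_
      rw [h1 t x j, h3 t x j]
      ring
    have hPb : Pb g ξ₀ η₀ t x v = 0 := by
      unfold Pb
      have hM : ∀ a b, Mmat g ξ₀ η₀ t x a b + Mmat g ξ₀ η₀ t x b a = 0 := by
        intro a b
        have hMa := Madd g hgsym ξ₀ η₀ t x a b
        have h2' := h2 t x a b
        linarith
      have hsw : ∑ a, ∑ b, (v a * v b) * Mmat g ξ₀ η₀ t x a b
          = ∑ a, ∑ b, (v a * v b) * Mmat g ξ₀ η₀ t x b a := by
        rw [Finset.sum_comm]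
        exact Finset.sum_congr rfl fun a _ => Finset.sum_congr rfl fun b _ => by ring
      have hadd : (∑ a, ∑ b, (v a * v b) * Mmat g ξ₀ η₀ t x a b)
          + (∑ a, ∑ b, (v a * v b) * Mmat g ξ₀ η₀ t x b a) = 0 := by
        rw [← Finset.sum_add_distrib]
        refine Finset.sum_eq_zero fun a _ => ?_
        rw [← Finset.sum_add_distrib]
        refine Finset.sum_eq_zero fun b _ => ?_
        rw [← mul_add, hM a b, mul_zero]
      linarith
    have hPc : Pc g ξ₀ t x v = 0 := by
      unfold Pc
      have hl : ∑ k, v k * pdx ξ₀ k t x = 0 :=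
        Finset.sum_eq_zero fun k _ => by rw [h1 t x k, mul_zero]
      rw [hl]
      ring
    unfold NF
    rw [hPz, hPa, hPb, hPc]
    ring
end

section
/- Approximate Noether symmetries are generated by the homothetic algebra (coordinate form of the paper's Theorem 1): Let g : ℝ^n → Sym(n,ℝ) be a smooth field of symmetric matrices with g(x) invertible for every x, let V₀, V₁, ξ₀, ξ₁, f₀, f₁ : ℝ × ℝ^n → ℝ be smooth with ξ₀, ξ₁ depending only on t, and suppose η_A(t,x) = T_A(t) Y_A(x) for A = 0,1, with T_A, Y_A differentiable and each T_A nonvanishing at some time. Suppose the determining equations (L_{η_A(t,·)} g)_{ij}(x) = (∂_t ξ_A)(t) g_{ij}(x) hold for all (t,x), all i,j, and A = 0,1 (these are the metric-sector approximate Noether conditions of the perturbed Lagrangian L = ½ Σ g_{ij}(x) v^i v^j − V₀(t,x) − ε V₁(t,x)). Then there exist constants ψ₀, ψ₁ ∈ ℝ such that L_{Y_A} g = 2ψ_A g and ∂_t ξ_A(t) = 2 ψ_A T_A(t) for all t and A = 0,1; that is, both Y₀ and Y₁ are homothetic (or Killing) vector fields of the metric g. -/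
open scoped BigOperators

/-- The coordinate expression of the Lie derivative of a symmetric matrix
field `g` along a vector field `W` on `ℝⁿ`:
`(L_W g)_{ij} = Σₖ Wᵏ ∂_{xᵏ}g_{ij} + Σₖ g_{kj} ∂_{xⁱ}Wᵏ + Σₖ g_{ik} ∂_{xʲ}Wᵏ`. -/
noncomputable def lieDerivMetric {n : ℕ}
    (W : (Fin n → ℝ) → Fin n → ℝ) (g : (Fin n → ℝ) → Fin n → Fin n → ℝ)
    (x : Fin n → ℝ) (i j : Fin n) : ℝ :=
  (∑ k, W x k * fderiv ℝ (fun y => g y i j) x (Pi.single k 1))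
    + (∑ k, g x k j * fderiv ℝ (fun y => W y k) x (Pi.single i 1))
    + (∑ k, g x i k * fderiv ℝ (fun y => W y k) x (Pi.single j 1))

lemma lieDerivMetric_const_smul {n : ℕ} (c : ℝ)
    (Y : (Fin n → ℝ) → Fin n → ℝ) (g : (Fin n → ℝ) → Fin n → Fin n → ℝ)
    (hY : ∀ k : Fin n, Differentiable ℝ (fun x => Y x k))
    (x : Fin n → ℝ) (i j : Fin n) :
    lieDerivMetric (fun y k => c * Y y k) g x i j = c * lieDerivMetric Y g x i j := by
  unfold lieDerivMetric
  have hder : ∀ (k m : Fin n), fderiv ℝ (fun y => c * Y y k) x (Pi.single m 1)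
      = c * fderiv ℝ (fun y => Y y k) x (Pi.single m 1) := by
    intro k m
    rw [fderiv_const_mul ((hY k).differentiableAt)]
    simp
  simp only [hder, mul_add, Finset.mul_sum]
  congr 1
  · congr 1
    · exact Finset.sum_congr rfl (fun k _ => by ring)
    · exact Finset.sum_congr rfl (fun k _ => by ring)
  · exact Finset.sum_congr rfl (fun k _ => by ring)

/-- Approximate Noether symmetries are generated by the homothetic algebra
(coordinate form of the paper's Theorem 1): for the perturbed Lagrangian
`L = ½ Σ g_{ij}(x) vⁱ vʲ − V₀(t,x) − ε V₁(t,x)` with `g` smooth, symmetric and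
everywhere invertible, if the metric-sector determining equations
`(L_{η_A(t,·)} g)_{ij}(x) = ξ_A'(t) g_{ij}(x)` hold for `A = 0,1`, where
`η_A(t,x) = T_A(t) Y_A(x)` and each `T_A` is nonvanishing at some time, then
there are constants `ψ₀, ψ₁` with `L_{Y_A} g = 2ψ_A g` and
`ξ_A'(t) = 2ψ_A T_A(t)`; i.e. both `Y₀` and `Y₁` are homothetic (or Killing)
vector fields of the metric `g`. -/
theorem approx_noether_generated_by_homothetic_algebra
    (n : ℕ) (hn : 1 ≤ n)
    (g : (Fin n → ℝ) → Fin n → Fin n → ℝ)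
    (hg : ∀ i j : Fin n, ContDiff ℝ (⊤ : ℕ∞) (fun x => g x i j))
    (hgsym : ∀ (x : Fin n → ℝ) (i j : Fin n), g x i j = g x j i)
    (hginv : ∀ x : Fin n → ℝ, (Matrix.of (g x)).det ≠ 0)
    (V₀ V₁ f₀ f₁ : ℝ → (Fin n → ℝ) → ℝ)
    (hV₀ : ContDiff ℝ (⊤ : ℕ∞) (Function.uncurry V₀))
    (hV₁ : ContDiff ℝ (⊤ : ℕ∞) (Function.uncurry V₁))
    (hf₀ : ContDiff ℝ (⊤ : ℕ∞) (Function.uncurry f₀))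
    (hf₁ : ContDiff ℝ (⊤ : ℕ∞) (Function.uncurry f₁))
    (ξ : Fin 2 → ℝ → ℝ) (hξ : ∀ A : Fin 2, ContDiff ℝ (⊤ : ℕ∞) (ξ A))
    (T : Fin 2 → ℝ → ℝ) (Y : Fin 2 → (Fin n → ℝ) → Fin n → ℝ)
    (hT : ∀ A : Fin 2, Differentiable ℝ (T A))
    (hY : ∀ (A : Fin 2) (k : Fin n), Differentiable ℝ (fun x => Y A x k))
    (hTne : ∀ A : Fin 2, ∃ t₁ : ℝ, T A t₁ ≠ 0)
    (hdet : ∀ (A : Fin 2) (t : ℝ) (x : Fin n → ℝ) (i j : Fin n),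
      lieDerivMetric (fun y k => T A t * Y A y k) g x i j
        = deriv (ξ A) t * g x i j) :
    ∃ ψ : Fin 2 → ℝ, ∀ A : Fin 2,
      (∀ (x : Fin n → ℝ) (i j : Fin n),
        lieDerivMetric (Y A) g x i j = 2 * ψ A * g x i j)
      ∧ (∀ t : ℝ, deriv (ξ A) t = 2 * ψ A * T A t) := by
  haveI : Nonempty (Fin n) := Fin.pos_iff_nonempty.mp (by omega)
  -- `g 0` is nonzero somewhere
  obtain ⟨i₀, j₀, hg0⟩ : ∃ i j : Fin n, g 0 i j ≠ 0 := by
    by_contra h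
    push_neg at h
    apply hginv 0
    have hz : (Matrix.of (g 0)) = 0 := by
      ext i j; exact h i j
    rw [hz, Matrix.det_zero]
  have key : ∀ (A : Fin 2) (t : ℝ) (x : Fin n → ℝ) (i j : Fin n),
      T A t * lieDerivMetric (Y A) g x i j = deriv (ξ A) t * g x i j := by
    intro A t x i j
    have h := hdet A t x i j
    rwa [lieDerivMetric_const_smul (T A t) (Y A) g (hY A) x i j] at h
  choose t₁ ht₁ using hTne
  refine ⟨fun A => deriv (ξ A) (t₁ A) / (2 * T A (t₁ A)), fun A => ?_⟩
  set ψ : ℝ := deriv (ξ A) (t₁ A) / (2 * T A (t₁ A)) with hψ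
  have hlie : ∀ (x : Fin n → ℝ) (i j : Fin n),
      lieDerivMetric (Y A) g x i j = 2 * ψ * g x i j := by
    intro x i j
    have h := key A (t₁ A) x i j
    have hT0 := ht₁ A
    rw [hψ]
    field_simp
    linarith [h]
  refine ⟨hlie, fun t => ?_⟩
  have h := key A t 0 i₀ j₀
  rw [hlie 0 i₀ j₀] at h
  have : (T A t * (2 * ψ) - deriv (ξ A) t) * g 0 i₀ j₀ = 0 := by linear_combination h
  rcases mul_eq_zero.mp this with h' | h'
  · linarith [h']
  · exact absurd h' hg0
end

section
/- Approximate conservation law from the symmetry ε(t²∂_t + tx∂_x) for the perturbed inverse-square system (Case II, symmetry Z₃): Let V₀, V₁, ε ∈ ℝ and let x : (0,∞) → ℝ be twice differentiable with x(t) ≠ 0 and ẍ(t) = −2V₀ x(t)^{−3} + ε V₁ x(t)/t² for all t > 0. Then with H₀(t) = ½ ẋ(t)² − V₀ x(t)^{−2}, the quantity I(t) = ε ( t² H₀(t) − t x(t) ẋ(t) + ½ x(t)² ) satisfies (d/dt) I(t) = ε² V₁ ( x(t) ẋ(t) − x(t)²/t ) for all t > 0; i.e. I is a first-order approximate first integral,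 conserved modulo terms of order ε². -/
/-- Approximate conservation law from the symmetry `ε(t²∂ₜ + tx∂ₓ)` for the
perturbed inverse-square system (Case II, symmetry `Z₃`): for a solution of
`ẍ = −2V₀ x⁻³ + ε V₁ x / t²` on `(0,∞)` with `x(t) ≠ 0`, and
`H₀ = ½ ẋ² − V₀ x⁻²`, the quantity `I = ε (t² H₀ − t x ẋ + ½ x²)` satisfies
`dI/dt = ε² V₁ (x ẋ − x² / t)`, i.e. `I` is a first-order approximate first
integral, conserved modulo terms of order `ε²`. -/
theorem approx_Z3_integral_inverse_square
    (V₀ V₁ ε : ℝ) (x x' : ℝ → ℝ)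
    (hxne : ∀ t ∈ Set.Ioi (0:ℝ), x t ≠ 0)
    (hx : ∀ t ∈ Set.Ioi (0:ℝ), HasDerivAt x (x' t) t)
    (hode : ∀ t ∈ Set.Ioi (0:ℝ), HasDerivAt x'
      (-2 * V₀ * (x t)^(-3 : ℤ) + ε * V₁ * x t / t^2) t) :
    ∀ t ∈ Set.Ioi (0:ℝ),
      HasDerivAt
        (fun s => ε * (s^2 * ((1/2) * (x' s)^2 - V₀ * (x s)^(-2 : ℤ))
          - s * x s * x' s + (1/2) * (x s)^2))
        (ε^2 * V₁ * (x t * x' t - (x t)^2 / t)) t := by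
  intro t ht
  have ht0 : (0:ℝ) < t := ht
  have hx1 := hx t ht
  have hx2 := hode t ht
  have hxn := hxne t ht
  have hpow : HasDerivAt (fun s => (x s)^(-2:ℤ))
      (((-2 : ℤ) : ℝ) * (x t)^((-2:ℤ) - 1) * x' t) t :=
    (hasDerivAt_zpow (-2) (x t) (Or.inl hxn)).comp t hx1
  set x'' := -2 * V₀ * (x t)^(-3 : ℤ) + ε * V₁ * x t / t^2 with hx''
  have H : HasDerivAt
      (fun s => ε * (s^2 * ((1/2) * (x' s)^2 - V₀ * (x s)^(-2 : ℤ))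
          - s * x s * x' s + (1/2) * (x s)^2))
      (ε * ((2 * t) * ((1/2) * (x' t)^2 - V₀ * (x t)^(-2 : ℤ))
        + t^2 * ((1/2) * (2 * x' t * x'') - V₀ * (((-2 : ℤ) : ℝ) * (x t)^((-2:ℤ)-1) * x' t))
        - ((1 * x t + t * x' t) * x' t + t * x t * x'')
        + (1/2) * (2 * x t * x' t))) t := by
    have h1 : HasDerivAt (fun s : ℝ => s^2) (2 * t) t := by
      simpa using (hasDerivAt_pow 2 t)
    have h2 : HasDerivAt (fun s => (1/2) * (x' s)^2 - V₀ * (x s)^(-2 : ℤ))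
        ((1/2) * (2 * x' t * x'') - V₀ * (((-2 : ℤ) : ℝ) * (x t)^((-2:ℤ)-1) * x' t)) t := by
      have hsq : HasDerivAt (fun s => (x' s)^2) (2 * x' t * x'') t := by
        simpa [Function.comp_def, mul_comm, mul_assoc, mul_left_comm] using
          ((hasDerivAt_pow 2 (x' t)).comp t hx2)
      exact (hsq.const_mul (1/2)).sub (hpow.const_mul V₀)
    have h3 : HasDerivAt (fun s => s * x s * x' s)
        ((1 * x t + t * x' t) * x' t + t * x t * x'') t :=
      ((hasDerivAt_id t).mul hx1).mul hx2
    have h4 : HasDerivAt (fun s => (1/2) * (x s)^2) ((1/2) * (2 * x t * x' t)) t := by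
      have : HasDerivAt (fun s => (x s)^2) (2 * x t * x' t) t := by
        simpa [Function.comp_def, mul_comm, mul_assoc, mul_left_comm] using
          ((hasDerivAt_pow 2 (x t)).comp t hx1)
      exact this.const_mul (1/2)
    exact (((h1.mul h2).sub h3).add h4).const_mul ε
  convert H using 1
  have htne : t ≠ 0 := ne_of_gt ht0
  have h3 : (x t)^(-3:ℤ) = ((x t)^3)⁻¹ := by
    rw [zpow_neg, zpow_ofNat]
  have h2 : (x t)^(-2:ℤ) = ((x t)^2)⁻¹ := by
    rw [zpow_neg, zpow_ofNat]
  have h3' : (x t)^((-2:ℤ)-1) = ((x t)^3)⁻¹ := by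
    rw [show ((-2:ℤ)-1) = -3 by norm_num, h3]
  rw [hx'', h2, h3, h3']
  field_simp
  ring
end

section
/- Approximate scaling integral for the perturbed central inverse-square potential in the plane (Case V, symmetry Z₁ = ε(2t∂_t + x∂_x + y∂_y)): Let ε ∈ ℝ and let x, y : J → ℝ be twice differentiable on an interval J with x(t)² + y(t)² ≠ 0 and ẍ(t) = −x(t)/(x(t)² + y(t)²)² − ε x(t), ÿ(t) = −y(t)/(x(t)² + y(t)²)² − ε y(t) for all t ∈ J. Then with H₀(t) = ½(ẋ(t)² + ẏ(t)²) − ½ (x(t)² + y(t)²)^{−1}, the quantity I(t) = ε ( 2t H₀(t) − x(t) ẋ(t) − y(t) ẏ(t) ) satisfies (d/dt) I(t) = ε² ( x(t)² + y(t)² − 2t ( x(t) ẋ(t) + y(t) ẏ(t) ) ) for all t ∈ J; i.e. I is a first-order approximate first integral, conserved modulo terms of order ε². -/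
/-- Approximate scaling integral for the perturbed central inverse-square
potential in the plane (Case V, symmetry `Z₁ = ε(2t∂ₜ + x∂ₓ + y∂_y)`): for a
solution on an interval `J` of `ẍ = −x/(x²+y²)² − εx`, `ÿ = −y/(x²+y²)² − εy`
with `x² + y² ≠ 0`, and `H₀ = ½(ẋ² + ẏ²) − ½(x² + y²)⁻¹`, the quantity
`I = ε(2t H₀ − x ẋ − y ẏ)` satisfies
`dI/dt = ε²(x² + y² − 2t(x ẋ + y ẏ))`, i.e. `I` is a first-order approximate
first integral, conserved modulo terms of order `ε²`. -/
theorem approx_scaling_integral_central_potential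
    (ε : ℝ) (J : Set ℝ) (hJ : J.OrdConnected) (x y x' y' : ℝ → ℝ)
    (hne : ∀ t ∈ J, (x t)^2 + (y t)^2 ≠ 0)
    (hx : ∀ t ∈ J, HasDerivAt x (x' t) t)
    (hy : ∀ t ∈ J, HasDerivAt y (y' t) t)
    (hodex : ∀ t ∈ J, HasDerivAt x' (-x t / ((x t)^2 + (y t)^2)^2 - ε * x t) t)
    (hodey : ∀ t ∈ J, HasDerivAt y' (-y t / ((x t)^2 + (y t)^2)^2 - ε * y t) t) :
    ∀ t ∈ J,
      HasDerivAt
        (fun s => ε * (2 * s * ((1/2) * ((x' s)^2 + (y' s)^2)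
            - (1/2) * ((x s)^2 + (y s)^2)⁻¹)
          - x s * x' s - y s * y' s))
        (ε^2 * ((x t)^2 + (y t)^2 - 2 * t * (x t * x' t + y t * y' t))) t := by
  intro t ht
  have hxt := hx t ht
  have hyt := hy t ht
  have hxx := hodex t ht
  have hyy := hodey t ht
  have hne' := hne t ht
  have hr : HasDerivAt (fun s => (x s)^2 + (y s)^2)
      (2 * x t * x' t + 2 * y t * y' t) t := by
    have := ((hxt.pow 2).add (hyt.pow 2))
    simp [mul_comm, mul_assoc, mul_left_comm] at this ⊢; exact this
  have hinv : HasDerivAt (fun s => ((x s)^2 + (y s)^2)⁻¹)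
      (-(2 * x t * x' t + 2 * y t * y' t) / ((x t)^2 + (y t)^2)^2) t := by
    have := hr.inv hne'
    simp [div_eq_mul_inv] at this ⊢; exact this
  have hH : HasDerivAt (fun s => (1/2 : ℝ) * ((x' s)^2 + (y' s)^2)
      - (1/2) * ((x s)^2 + (y s)^2)⁻¹)
      ((1/2) * (2 * x' t * (-x t / ((x t)^2 + (y t)^2)^2 - ε * x t)
        + 2 * y' t * (-y t / ((x t)^2 + (y t)^2)^2 - ε * y t))
       - (1/2) * (-(2 * x t * x' t + 2 * y t * y' t) / ((x t)^2 + (y t)^2)^2)) t := by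
    have := ((((hxx.pow 2).add (hyy.pow 2)).const_mul (1/2 : ℝ)).sub
      (hinv.const_mul (1/2 : ℝ)))
    simp at this ⊢; exact this
  have hmain : HasDerivAt
      (fun s => ε * (2 * s * ((1/2) * ((x' s)^2 + (y' s)^2)
          - (1/2) * ((x s)^2 + (y s)^2)⁻¹)
        - x s * x' s - y s * y' s))
      (ε * ((2 * ((1/2) * ((x' t)^2 + (y' t)^2) - (1/2) * ((x t)^2 + (y t)^2)⁻¹)
          + 2 * t * ((1/2) * (2 * x' t * (-x t / ((x t)^2 + (y t)^2)^2 - ε * x t)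
            + 2 * y' t * (-y t / ((x t)^2 + (y t)^2)^2 - ε * y t))
           - (1/2) * (-(2 * x t * x' t + 2 * y t * y' t) / ((x t)^2 + (y t)^2)^2)))
        - (x' t * x' t + x t * (-x t / ((x t)^2 + (y t)^2)^2 - ε * x t))
        - (y' t * y' t + y t * (-y t / ((x t)^2 + (y t)^2)^2 - ε * y t)))) t := by
    have h2s : HasDerivAt (fun s : ℝ => 2 * s) 2 t := by
      simpa using (hasDerivAt_id t).const_mul (2 : ℝ)
    exact ((((h2s.mul hH).sub (hxt.mul hxx)).sub (hyt.mul hyy)).const_mul ε)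
  convert hmain using 1
  field_simp
  ring
end

section
/- Approximate conformal integral for the perturbed central inverse-square potential in the plane (Case V, symmetry Z₃ = ε(t²∂_t + tx∂_x + ty∂_y)): Let ε ∈ ℝ and let x, y : J → ℝ be twice differentiable on an interval J with x(t)² + y(t)² ≠ 0 and ẍ(t) = −x(t)/(x(t)² + y(t)²)² − ε x(t), ÿ(t) = −y(t)/(x(t)² + y(t)²)² − ε y(t) for all t ∈ J. Then with H₀(t) = ½(ẋ(t)² + ẏ(t)²) − ½ (x(t)² + y(t)²)^{−1}, the quantity I(t) = ε ( t² H₀(t) − t ( x(t) ẋ(t) + y(t) ẏ(t) ) + ½ ( x(t)² + y(t)² ) ) satisfies (d/dt) I(t) = ε² t ( x(t)² + y(t)² − t ( x(t) ẋ(t) + y(t) ẏ(t) ) ) for all t ∈ J; i.e. I is a first-order approximate first integral, conserved modulo terms of order ε². -/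
/-- Approximate conformal integral for the perturbed central inverse-square
potential in the plane (Case V, symmetry `Z₃ = ε(t²∂ₜ + tx∂ₓ + ty∂_y)`): for a
solution on an interval `J` of `ẍ = −x/(x²+y²)² − εx`, `ÿ = −y/(x²+y²)² − εy`
with `x² + y² ≠ 0`, and `H₀ = ½(ẋ² + ẏ²) − ½(x² + y²)⁻¹`, the quantity
`I = ε(t² H₀ − t(x ẋ + y ẏ) + ½(x² + y²))` satisfies
`dI/dt = ε² t (x² + y² − t(x ẋ + y ẏ))`, i.e. `I` is a first-order approximate
first integral, conserved modulo terms of order `ε²`. -/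
theorem approx_conformal_integral_central_potential
    (ε : ℝ) (J : Set ℝ) (hJ : J.OrdConnected) (x y x' y' : ℝ → ℝ)
    (hne : ∀ t ∈ J, (x t)^2 + (y t)^2 ≠ 0)
    (hx : ∀ t ∈ J, HasDerivAt x (x' t) t)
    (hy : ∀ t ∈ J, HasDerivAt y (y' t) t)
    (hodex : ∀ t ∈ J, HasDerivAt x' (-x t / ((x t)^2 + (y t)^2)^2 - ε * x t) t)
    (hodey : ∀ t ∈ J, HasDerivAt y' (-y t / ((x t)^2 + (y t)^2)^2 - ε * y t) t) :
    ∀ t ∈ J,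
      HasDerivAt
        (fun s => ε * (s^2 * ((1/2) * ((x' s)^2 + (y' s)^2)
            - (1/2) * ((x s)^2 + (y s)^2)⁻¹)
          - s * (x s * x' s + y s * y' s) + (1/2) * ((x s)^2 + (y s)^2)))
        (ε^2 * t * ((x t)^2 + (y t)^2 - t * (x t * x' t + y t * y' t))) t := by
  intro t ht
  have hxt := hx t ht
  have hyt := hy t ht
  have hxt' := hodex t ht
  have hyt' := hodey t ht
  have hnet := hne t ht
  have hr : HasDerivAt (fun s => (x s)^2 + (y s)^2)
      (2 * x t * x' t + 2 * y t * y' t) t := by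
    have := ((hxt.pow 2).add (hyt.pow 2))
    exact this.congr_deriv (by norm_num)
  have hK : HasDerivAt (fun s => (x' s)^2 + (y' s)^2)
      (2 * x' t * (-x t / ((x t)^2 + (y t)^2)^2 - ε * x t)
       + 2 * y' t * (-y t / ((x t)^2 + (y t)^2)^2 - ε * y t)) t := by
    have := ((hxt'.pow 2).add (hyt'.pow 2))
    exact this.congr_deriv (by norm_num)
  have hinv : HasDerivAt (fun s => ((x s)^2 + (y s)^2)⁻¹)
      (-(2 * x t * x' t + 2 * y t * y' t) / ((x t)^2 + (y t)^2)^2) t :=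
    hr.inv hnet
  have hp : HasDerivAt (fun s => x s * x' s + y s * y' s)
      (x' t * x' t + x t * (-x t / ((x t)^2 + (y t)^2)^2 - ε * x t)
       + (y' t * y' t + y t * (-y t / ((x t)^2 + (y t)^2)^2 - ε * y t))) t :=
    (hxt.mul hxt').add (hyt.mul hyt')
  have hid : HasDerivAt (fun s : ℝ => s) 1 t := hasDerivAt_id t
  have hsq : HasDerivAt (fun s : ℝ => s^2) (2 * t) t := by
    simpa using hasDerivAt_pow 2 t
  have hmain := (((hsq.mul ((hK.const_mul ((1:ℝ)/2)).sub
      (hinv.const_mul ((1:ℝ)/2)))).sub (hid.mul hp)).add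
      (hr.const_mul ((1:ℝ)/2))).const_mul ε
  refine hmain.congr_deriv ?_
  have h2 : ((x t)^2 + (y t)^2)^2 ≠ 0 := pow_ne_zero 2 hnet
  simp only [Pi.sub_apply]
  field_simp
  ring
end
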